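/- Let R be a commutative noetherian ring, Φ ⊆ Spec R, and n ≥ 0. Then the class C^n_Φ of modules admitting an injective copresentation of length n by injectives with associated primes in Φ is closed under n-kernels: if 0 → M → X_0 → X_1 → ⋯ → X_n is exact with each X_i ∈ C^n_Φ, then M ∈ C^n_Φ. -/

import Mathlib

/-!
`X ∈ C^{n+1}_Φ` iff `X` embeds into an injective `I` with `Ass I ⊆ Φ` whose cokernel lies in
`C^n_Φ`. Since `Ass (I × I') = Ass I ∪ Ass I'`, the horseshoe construction shows that every
`C^n_Φ` is closed under extensions. Given `0 → M → X_0 → ⋯ → X_{n+1}`, embed `X_0 ↪ I` with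
`I / X_0 ∈ C^n_Φ`. By induction `X_0 / M ∈ C^n_Φ`, being an `n`-kernel of `X_1 → ⋯ → X_{n+1}`, and
the extension `0 → X_0 / M → I / M → I / X_0 → 0` puts `I / M` in `C^n_Φ`, hence `M ∈ C^{n+1}_Φ`.
-/

/-- The set of associated primes, as a subset of the prime spectrum. -/
def assSet (R : Type) [CommRing R] (M : Type) [AddCommGroup M] [Module R M] :
    Set (PrimeSpectrum R) :=
  { p | p.asIdeal ∈ associatedPrimes R M }

/-- Membership in the class `C^n_Φ`: an `R`-module `X` belongs to `C^n_Φ` if there is an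
exact sequence `0 → X → I^0 → I^1 → ⋯ → I^n` with every `I^i` (for `0 ≤ i ≤ n`) injective
and with associated primes contained in `Φ`. -/
def CMem (R : Type) [CommRing R] (Φ : Set (PrimeSpectrum R)) (n : ℕ)
    (M : Type) [AddCommGroup M] [Module R M] : Prop :=
  ∃ (I : ℕ → Type) (_ : ∀ i, AddCommGroup (I i)) (_ : ∀ i, Module R (I i))
    (d : ∀ i, I i →ₗ[R] I (i + 1)) (ε : M →ₗ[R] I 0),
    Function.Injective ε ∧
    (0 < n → Function.Exact ε (d 0)) ∧
    (∀ i, i + 2 ≤ n → Function.Exact (d i) (d (i + 1))) ∧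
    (∀ i ≤ n, Module.Injective R (I i)) ∧
    (∀ i ≤ n, assSet R (I i) ⊆ Φ)


open Function LinearMap Submodule

universe u v

instance Module.Injective.prod {R : Type u} [Ring R] [Small.{v} R] {P Q : Type v}
    [AddCommGroup P] [AddCommGroup Q] [Module R P] [Module R Q]
    [Module.Injective R P] [Module.Injective R Q] : Module.Injective R (P × Q) :=
  ⟨fun X Y _ _ _ _ f hf g => by
    obtain ⟨h₁, hh₁⟩ := Module.Injective.extension_property R P X Y f hf (fst R P Q ∘ₗ g)
    obtain ⟨h₂, hh₂⟩ := Module.Injective.extension_property R Q X Y f hf (snd R P Q ∘ₗ g)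
    exact ⟨h₁.prod h₂, fun x => Prod.ext (LinearMap.congr_fun hh₁ x) (LinearMap.congr_fun hh₂ x)⟩⟩

lemma assSet_prod (R : Type) [CommRing R] (P Q : Type) [AddCommGroup P] [AddCommGroup Q]
    [Module R P] [Module R Q] : assSet R (P × Q) = assSet R P ∪ assSet R Q := by
  ext p
  simp only [assSet, associatedPrimes.prod]
  rfl

section Quotients

variable {R : Type*} [CommRing R] {M N P : Type*} [AddCommGroup M] [AddCommGroup N]
  [AddCommGroup P] [Module R M] [Module R N] [Module R P]

lemma exact_liftQ_iff {Q : Type*} [AddCommGroup Q] [Module R Q] {f : M →ₗ[R] N}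
    {g : N →ₗ[R] P} (hfg : range f ≤ ker g) (h : P →ₗ[R] Q) :
    Exact ((range f).liftQ g hfg) h ↔ Exact g h := by
  rw [← (mkQ_surjective (range f)).comp_exact_iff_exact, liftQ_mkQ]

lemma exists_shortExact_quotient_quotient (f : M →ₗ[R] N) {ε : N →ₗ[R] P}
    (hε : Injective ε) :
    ∃ (ι : (N ⧸ range f) →ₗ[R] P ⧸ range (ε ∘ₗ f)) (π : (P ⧸ range (ε ∘ₗ f)) →ₗ[R] P ⧸ range ε),
      Injective ι ∧ Exact ι π ∧ Surjective π := by
  have hle : range f ≤ comap ε (range (ε ∘ₗ f)) := by rw [← map_le_iff_le_comap, range_comp]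
  refine ⟨mapQ _ _ ε hle, factor (range_comp_le_range f ε), ?_, ?_, factor_surjective _⟩
  · rw [← ker_eq_bot, ker_mapQ, range_comp, comap_map_eq_of_injective hε, mkQ_map_self]
  · rw [exact_iff]
    simp [factor, ker_mapQ, range_mapQ]

end Quotients

lemma exists_horseshoe {R : Type} [CommRing R] {A B C IA IC : Type} [AddCommGroup A]
    [AddCommGroup B] [AddCommGroup C] [AddCommGroup IA] [AddCommGroup IC] [Module R A]
    [Module R B] [Module R C] [Module R IA] [Module R IC] [Module.Injective R IA]
    {i : A →ₗ[R] B} {p : B →ₗ[R] C} (hi : Injective i) (hip : Exact i p) (hp : Surjective p)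
    {εA : A →ₗ[R] IA} {εC : C →ₗ[R] IC} (hεA : Injective εA) (hεC : Injective εC) :
    ∃ β : B →ₗ[R] IA × IC, Injective β ∧
      ∃ (ι : (IA ⧸ range εA) →ₗ[R] (IA × IC) ⧸ range β)
        (π : ((IA × IC) ⧸ range β) →ₗ[R] IC ⧸ range εC),
        Injective ι ∧ Exact ι π ∧ Surjective π := by
  obtain ⟨α, hα⟩ := Module.Injective.extension_property R IA A B i hi εA
  set β := α.prod (εC ∘ₗ p)
  have lift : ∀ b x, β b = (x, 0) → ∃ a, i a = b ∧ εA a = x := by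
    intro b x hb
    obtain ⟨hαb, hpb⟩ := Prod.mk.inj hb
    obtain ⟨a, rfl⟩ := (hip b).mp (hεC (hpb.trans (map_zero εC).symm))
    exact ⟨a, rfl, (LinearMap.congr_fun hα a).symm.trans hαb⟩
  have hβ : Injective β := by
    refine (injective_iff_map_eq_zero β).mpr fun b hb => ?_
    obtain ⟨a, rfl, ha⟩ := lift b 0 hb
    rw [hεA (ha.trans (map_zero εA).symm), map_zero]
  have hA : range εA ≤ comap (inl R IA IC) (range β) := by
    rintro _ ⟨a, rfl⟩
    refine ⟨i a, Prod.ext (LinearMap.congr_fun hα a) ?_⟩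
    simp [β, hip.apply_apply_eq_zero]
  have hC : range β ≤ comap (snd R IA IC) (range εC) := by
    rintro _ ⟨b, rfl⟩
    exact ⟨p b, rfl⟩
  refine ⟨β, hβ, mapQ _ _ _ hA, mapQ _ _ _ hC, ?_, ?_, ?_⟩
  · rw [← ker_eq_bot, ker_mapQ, eq_bot_iff, map_le_iff_le_comap, comap_bot, ker_mkQ]
    rintro x ⟨b, hb⟩
    obtain ⟨a, -, ha⟩ := lift b x hb
    exact ⟨a, ha⟩
  · refine (Exact.inl_snd.exact_mapQ_iff hA hC).mpr (inf_le_right.trans ?_)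
    rw [← range_comp, snd_prod, range_comp, range_eq_top.mpr hp, ← range_eq_map]
  · intro c
    obtain ⟨z, rfl⟩ := Submodule.Quotient.mk_surjective _ c
    exact ⟨Submodule.Quotient.mk (0, z), rfl⟩

def spliceFamily (I : Type) (J : ℕ → Type) : ℕ → Type
  | 0 => I
  | k + 1 => J k

namespace spliceFamily

variable {R : Type} [CommRing R] {I : Type} [AddCommGroup I] [Module R I] {J : ℕ → Type}
  [∀ k, AddCommGroup (J k)] [∀ k, Module R (J k)]

instance addCommGroup : ∀ k, AddCommGroup (spliceFamily I J k)
  | 0 => inferInstanceAs (AddCommGroup I)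
  | k + 1 => inferInstanceAs (AddCommGroup (J k))

instance module : ∀ k, Module R (spliceFamily I J k)
  | 0 => inferInstanceAs (Module R I)
  | k + 1 => inferInstanceAs (Module R (J k))

def d (d₀ : I →ₗ[R] J 0) (dJ : ∀ k, J k →ₗ[R] J (k + 1)) :
    ∀ k, spliceFamily I J k →ₗ[R] spliceFamily I J (k + 1)
  | 0 => d₀
  | k + 1 => dJ k

end spliceFamily

section CMem

variable {R : Type} [CommRing R] {Φ : Set (PrimeSpectrum R)} {M : Type} [AddCommGroup M]
  [Module R M]

lemma CMem.mono {m n : ℕ} (h : CMem R Φ n M) (hmn : m ≤ n) : CMem R Φ m M := by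
  obtain ⟨I, _, _, d, ε, hε, h0, hex, hinj, hass⟩ := h
  exact ⟨I, _, _, d, ε, hε, fun hm => h0 (hm.trans_le hmn), fun i hi => hex i (hi.trans hmn),
    fun i hi => hinj i (hi.trans hmn), fun i hi => hass i (hi.trans hmn)⟩

lemma cMem_zero_iff :
    CMem R Φ 0 M ↔ ∃ (I : Type) (_ : AddCommGroup I) (_ : Module R I) (ε : M →ₗ[R] I),
      Injective ε ∧ Module.Injective R I ∧ assSet R I ⊆ Φ := by
  constructor
  · rintro ⟨I, _, _, -, ε, hε, -, -, hinj, hass⟩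
    exact ⟨I 0, _, _, ε, hε, hinj 0 le_rfl, hass 0 le_rfl⟩
  · rintro ⟨I, _, _, ε, hε, hI, hIΦ⟩
    exact ⟨fun _ => I, _, _, fun _ => 0, ε, hε, fun h => absurd h (lt_irrefl 0),
      fun i hi => absurd hi (by omega), fun _ _ => hI, fun _ _ => hIΦ⟩

lemma cMem_succ_iff {n : ℕ} :
    CMem R Φ (n + 1) M ↔ ∃ (I : Type) (_ : AddCommGroup I) (_ : Module R I) (ε : M →ₗ[R] I),
      Injective ε ∧ Module.Injective R I ∧ assSet R I ⊆ Φ ∧ CMem R Φ n (I ⧸ range ε) := by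
  constructor
  · rintro ⟨J, _, _, dJ, ε, hε, h0, hex, hinj, hass⟩
    refine ⟨J 0, _, _, ε, hε, hinj 0 (by omega), hass 0 (by omega), fun k => J (k + 1), _, _,
      fun k => dJ (k + 1), (range ε).liftQ (dJ 0) (h0 n.succ_pos · |>.mpr),
      injective_range_liftQ_of_exact (h0 n.succ_pos), fun _ => ?_,
      fun i hi => hex (i + 1) (by omega), fun i hi => hinj (i + 1) (by omega),
      fun i hi => hass (i + 1) (by omega)⟩
    exact (exact_liftQ_iff _ _).mpr (hex 0 (by omega))
  · rintro ⟨I, _, _, ε, hε, hI, hIΦ, J, _, _, dJ, εQ, hεQ, h0, hex, hinj, hass⟩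
    refine ⟨spliceFamily I J, spliceFamily.addCommGroup, spliceFamily.module,
      spliceFamily.d (εQ ∘ₗ (range ε).mkQ) dJ, ε, hε,
      fun _ => (hεQ.comp_exact_iff_exact (f := ε)).mpr (exact_map_mkQ_range ε), ?_, ?_, ?_⟩
    · rintro (_ | i) hi
      · exact ((mkQ_surjective (range ε)).comp_exact_iff_exact (g := dJ 0)).mpr (h0 (by omega))
      · exact hex i (by omega)
    · rintro (_ | i) hi
      exacts [hI, hinj i (by omega)]
    · rintro (_ | i) hi
      exacts [hIΦ, hass i (by omega)]

lemma cMem_of_shortExact {n : ℕ} {A B C : Type} [AddCommGroup A] [AddCommGroup B]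
    [AddCommGroup C] [Module R A] [Module R B] [Module R C] {i : A →ₗ[R] B} {p : B →ₗ[R] C}
    (hi : Injective i) (hip : Exact i p) (hp : Surjective p) (hA : CMem R Φ n A)
    (hC : CMem R Φ n C) : CMem R Φ n B := by
  induction n generalizing A B C with
  | zero =>
    obtain ⟨IA, _, _, εA, hεA, hIA, hAΦ⟩ := cMem_zero_iff.mp hA
    obtain ⟨IC, _, _, εC, hεC, hIC, hCΦ⟩ := cMem_zero_iff.mp hC
    obtain ⟨β, hβ, -⟩ := exists_horseshoe hi hip hp hεA hεC
    exact cMem_zero_iff.mpr ⟨IA × IC, _, _, β, hβ, inferInstance,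
      assSet_prod R IA IC ▸ Set.union_subset hAΦ hCΦ⟩
  | succ n ih =>
    obtain ⟨IA, _, _, εA, hεA, hIA, hAΦ, hA'⟩ := cMem_succ_iff.mp hA
    obtain ⟨IC, _, _, εC, hεC, hIC, hCΦ, hC'⟩ := cMem_succ_iff.mp hC
    obtain ⟨β, hβ, ι, π, hι, hιπ, hπ⟩ := exists_horseshoe hi hip hp hεA hεC
    exact cMem_succ_iff.mpr ⟨IA × IC, _, _, β, hβ, inferInstance,
      assSet_prod R IA IC ▸ Set.union_subset hAΦ hCΦ, ih hι hιπ hπ hA' hC'⟩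

end CMem

theorem cMem_closed_under_nKernels_general (R : Type) [CommRing R]
    (Φ : Set (PrimeSpectrum R)) (n : ℕ)
    (M : Type) [AddCommGroup M] [Module R M]
    (X : ℕ → Type) [∀ i, AddCommGroup (X i)] [∀ i, Module R (X i)]
    (f : M →ₗ[R] X 0) (d : ∀ i, X i →ₗ[R] X (i + 1))
    (hf : Function.Injective f)
    (h0 : 0 < n → Function.Exact f (d 0))
    (hex : ∀ i, i + 2 ≤ n → Function.Exact (d i) (d (i + 1)))
    (hX : ∀ i ≤ n, CMem R Φ n (X i)) :
    CMem R Φ n M := by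
  induction n generalizing M X with
  | zero =>
    obtain ⟨I, _, _, ε, hε, hI, hIΦ⟩ := cMem_zero_iff.mp (hX 0 le_rfl)
    exact cMem_zero_iff.mpr ⟨I, _, _, ε ∘ₗ f, hε.comp hf, hI, hIΦ⟩
  | succ m ih =>
    obtain ⟨I, _, _, ε, hε, hI, hIΦ, hQ⟩ := cMem_succ_iff.mp (hX 0 (by omega))
    have hf0 := h0 m.succ_pos
    have hK : CMem R Φ m (X 0 ⧸ range f) :=
      ih _ (fun i => X (i + 1)) _ (fun i => d (i + 1)) (injective_range_liftQ_of_exact hf0)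
        (fun _ => (exact_liftQ_iff _ _).mpr (hex 0 (by omega)))
        (fun i _ => hex (i + 1) (by omega)) (fun i hi => (hX (i + 1) (by omega)).mono (by omega))
    obtain ⟨ι, π, hι, hιπ, hπ⟩ := exists_shortExact_quotient_quotient f hε
    exact cMem_succ_iff.mpr ⟨I, _, _, ε ∘ₗ f, hε.comp hf, hI, hIΦ,
      cMem_of_shortExact hι hιπ hπ hK hQ⟩

/-- The class `C^n_Φ` is closed under `n`-kernels: if `0 → M → X_0 → ⋯ → X_n` is exact
with each `X_i ∈ C^n_Φ` for `0 ≤ i ≤ n`, then `M ∈ C^n_Φ`. -/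
theorem cMem_closed_under_nKernels (R : Type) [CommRing R] [IsNoetherianRing R]
    (Φ : Set (PrimeSpectrum R)) (n : ℕ)
    (M : Type) [AddCommGroup M] [Module R M]
    (X : ℕ → Type) [∀ i, AddCommGroup (X i)] [∀ i, Module R (X i)]
    (f : M →ₗ[R] X 0) (d : ∀ i, X i →ₗ[R] X (i + 1))
    (hf : Function.Injective f)
    (h0 : 0 < n → Function.Exact f (d 0))
    (hex : ∀ i, i + 2 ≤ n → Function.Exact (d i) (d (i + 1)))
    (hX : ∀ i ≤ n, CMem R Φ n (X i)) :
    CMem R Φ n M :=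
  cMem_closed_under_nKernels_general R Φ n M X f d hf h0 hex hX
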